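/- arXiv:2012.01247 — 5 statements merged into one kernel-verified Lean document; each statement's English description precedes it below -/
import Mathlib

section
/- Let (X, ≤) be a poset and {A_x : x ∈ X} an indexed family of bounded commutative integral residuated lattices, and let B = ∏_{x∈X} A_x be the direct product with pointwise order and pointwise operations. Then the operator □ is a conucleus on B; that is, for all f, g ∈ B: (i) □f ≤ f; (ii) □(□f) = □f; (iii) if f ≤ g then □f ≤ □g; (iv) (□f)·(□g) ≤ □(f·g); and (v) □1 = 1, where 1 denotes the constant function with value 1 (so in particular □1 · □f = □f for all f). -/
open Classical

/-- A bounded commutative integral residuated lattice. -/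
class CIRL (A : Type*) extends Lattice A, CommMonoid A, OrderBot A, HImp A where
  mul_le_iff_le_himp : ∀ x y z : A, x * y ≤ z ↔ x ≤ y ⇨ z
  le_one : ∀ x : A, x ≤ 1

lemma CIRL.bot_mul_le_bot {A : Type*} [CIRL A] (a : A) : (⊥ : A) * a ≤ ⊥ :=
  (CIRL.mul_le_iff_le_himp ⊥ a ⊥).2 bot_le

/-- The operator `□` on the direct product `∏ x, A x`:
`□ f x = f x` if `f y = 1` for all `y > x`, and `□ f x = ⊥` otherwise. -/
noncomputable def box {X : Type*} [PartialOrder X] {A : X → Type*} [∀ x, CIRL (A x)]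
    (f : ∀ x, A x) : ∀ x, A x :=
  fun x => if ∀ y, x < y → f y = 1 then f x else ⊥

lemma box_pos {X : Type*} [PartialOrder X] {A : X → Type*} [∀ x, CIRL (A x)]
    (f : ∀ x, A x) {x : X} (h : ∀ y, x < y → f y = 1) : box f x = f x := by
  simp only [box]; exact if_pos h

lemma box_neg {X : Type*} [PartialOrder X] {A : X → Type*} [∀ x, CIRL (A x)]
    (f : ∀ x, A x) {x : X} (h : ¬ ∀ y, x < y → f y = 1) : box f x = ⊥ := by
  simp only [box]; exact if_neg h

/-- `□` is a conucleus on the direct product `∏ x, A x`: it is contracting,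
idempotent, monotone, submultiplicative, and fixes `1` (so `□1 * □f = □f`). -/
theorem box_is_conucleus {X : Type*} [PartialOrder X] {A : X → Type*} [∀ x, CIRL (A x)]
    (f g : ∀ x, A x) :
    box f ≤ f ∧
    box (box f) = box f ∧
    (f ≤ g → box f ≤ box g) ∧
    box f * box g ≤ box (f * g) ∧
    box (1 : ∀ x, A x) = 1 ∧
    box (1 : ∀ x, A x) * box f = box f := by
  have hbox1 : box (1 : ∀ x, A x) = 1 := by
    funext x
    exact (box_pos 1 (fun y _ => rfl)).trans rfl
  refine ⟨?_, ?_, ?_, ?_, hbox1, by rw [hbox1, one_mul]⟩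
  · intro x
    by_cases h : ∀ y, x < y → f y = 1
    · rw [box_pos f h]
    · rw [box_neg f h]; exact bot_le
  · funext x
    by_cases h : ∀ y, x < y → box f y = 1
    · rw [box_pos (box f) h]
    · push_neg at h
      obtain ⟨y, hxy, hy⟩ := h
      have hfx : box f x = ⊥ := by
        by_cases hy' : ∀ z, y < z → f z = 1
        · have hfy : f y ≠ 1 := (box_pos f hy') ▸ hy
          exact box_neg f (fun h' => hfy (h' y hxy))
        · push_neg at hy'
          obtain ⟨z, hyz, hz⟩ := hy'
          exact box_neg f (fun h' => hz (h' z (hxy.trans hyz)))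
      rw [box_neg (box f) (fun h' => hy (h' y hxy)), hfx]
  · intro hfg x
    by_cases h : ∀ y, x < y → f y = 1
    · have hg : ∀ y, x < y → g y = 1 := fun y hy =>
        le_antisymm (CIRL.le_one _) ((h y hy) ▸ hfg y)
      rw [box_pos f h, box_pos g hg]; exact hfg x
    · rw [box_neg f h]; exact bot_le
  · intro x
    rw [Pi.mul_apply]
    by_cases hf : ∀ y, x < y → f y = 1
    · by_cases hg : ∀ y, x < y → g y = 1
      · have hfg : ∀ y, x < y → (f * g) y = 1 := fun y hy => by
          rw [Pi.mul_apply, hf y hy, hg y hy, one_mul]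
        rw [box_pos f hf, box_pos g hg, box_pos (f * g) hfg, Pi.mul_apply]
      · rw [box_neg g hg, mul_comm]
        exact (CIRL.bot_mul_le_bot _).trans bot_le
    · rw [box_neg f hf]
      exact (CIRL.bot_mul_le_bot _).trans bot_le
end

section
/- Let (X, ≤) be a poset and {A_x : x ∈ X} an indexed family of bounded commutative integral residuated lattices. If f, g ∈ ∏_{x∈X} A_x are antichain labelings, then the pointwise meet x ↦ f(x) ∧ g(x), the pointwise join x ↦ f(x) ∨ g(x), and the pointwise product x ↦ f(x)·g(x) are again antichain labelings; moreover the constant functions with values 0 and 1 are antichain labelings. Hence the poset product is a {∧, ∨, ·, 0, 1}-subalgebra of the direct product ∏_{x∈X} A_x. -/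
/-- `f` is an antichain labeling: for all `x < y`, `f x = ⊥` (i.e. `f x = 0`)
or `f y = 1`. -/
def IsACLabeling {X : Type*} [PartialOrder X] {A : X → Type*} [∀ x, CIRL (A x)]
    (f : ∀ x, A x) : Prop :=
  ∀ x y : X, x < y → f x = ⊥ ∨ f y = 1

lemma CIRL.bot_mul {A : Type*} [CIRL A] (a : A) : (⊥ : A) * a = ⊥ :=
  le_antisymm ((CIRL.mul_le_iff_le_himp ⊥ a ⊥).mpr bot_le) bot_le

lemma CIRL.mul_bot {A : Type*} [CIRL A] (a : A) : a * (⊥ : A) = ⊥ := by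
  rw [mul_comm]; exact CIRL.bot_mul a

/-- The antichain labelings are closed under pointwise meet, join, and product,
and contain the constant functions `0` (= `⊥`) and `1`; hence the poset
product is a `{∧, ∨, ·, 0, 1}`-subalgebra of the direct product. -/
theorem acLabelings_closed_under_lattice_monoid_ops {X : Type*} [PartialOrder X]
    {A : X → Type*} [∀ x, CIRL (A x)] (f g : ∀ x, A x)
    (hf : IsACLabeling f) (hg : IsACLabeling g) :
    IsACLabeling (fun x => f x ⊓ g x) ∧
    IsACLabeling (fun x => f x ⊔ g x) ∧
    IsACLabeling (fun x => f x * g x) ∧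
    IsACLabeling (fun x : X => (⊥ : A x)) ∧
    IsACLabeling (fun x : X => (1 : A x)) := by
  refine ⟨?_, ?_, ?_, fun x y _ => Or.inl rfl, fun x y _ => Or.inr rfl⟩
  · intro x y hxy
    rcases hf x y hxy with h | h
    · exact Or.inl (by simp [h])
    · rcases hg x y hxy with h' | h'
      · exact Or.inl (by simp [h'])
      · exact Or.inr (by simp [h, h'])
  · intro x y hxy
    rcases hf x y hxy with h | h
    · rcases hg x y hxy with h' | h'
      · exact Or.inl (by simp [h, h'])
      · exact Or.inr (le_antisymm (CIRL.le_one _) (by simp [h']))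
    · exact Or.inr (le_antisymm (CIRL.le_one _) (by simp [h]))
  · intro x y hxy
    rcases hf x y hxy with h | h
    · exact Or.inl (by simp [h, CIRL.bot_mul])
    · rcases hg x y hxy with h' | h'
      · exact Or.inl (by simp [h', CIRL.mul_bot])
      · exact Or.inr (by simp [h, h'])
end

section
/- Let (X, ≤) be a poset and {A_x : x ∈ X} an indexed family of bounded commutative integral residuated lattices, and let f, g, h ∈ ∏_{x∈X} A_x be antichain labelings. Then f(x)·g(x) ≤ h(x) for all x ∈ X if and only if f(x) ≤ □(y ↦ g(y) → h(y))(x) for all x ∈ X. In other words, the pointwise product and the operation (g, h) ↦ □(g → h) satisfy the residuation law on the poset product. -/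
open Classical

lemma CIRL.himp_eq_one {A : Type*} [CIRL A] {a b : A} (hab : a ≤ b) : a ⇨ b = 1 := by
  apply le_antisymm (CIRL.le_one _)
  rw [← CIRL.mul_le_iff_le_himp]
  simpa using hab

lemma CIRL.bot_mul_le {A : Type*} [CIRL A] (a b : A) : (⊥ : A) * a ≤ b := by
  have : (⊥ : A) * a ≤ ⊥ := by
    rw [CIRL.mul_le_iff_le_himp]; exact bot_le
  exact this.trans bot_le

/-- Residuation in the poset product: for antichain labelings `f, g, h`,
`f · g ≤ h` pointwise iff `f ≤ □(g ⇨ h)` pointwise. -/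
theorem posetProduct_residuation {X : Type*} [PartialOrder X]
    {A : X → Type*} [∀ x, CIRL (A x)] (f g h : ∀ x, A x)
    (hf : IsACLabeling f) (hg : IsACLabeling g) (hh : IsACLabeling h) :
    (∀ x, f x * g x ≤ h x) ↔ (∀ x, f x ≤ box (fun y => g y ⇨ h y) x) := by
  constructor
  · intro H x
    unfold box
    split
    next hcond =>
      rw [← CIRL.mul_le_iff_le_himp]; exact H x
    next hcond =>
      push_neg at hcond
      obtain ⟨y, hxy, hne⟩ := hcond
      rcases hf x y hxy with hfx | hfy
      · simp [hfx]
      · exfalso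
        apply hne
        apply CIRL.himp_eq_one
        have := H y
        rwa [hfy, one_mul] at this
  · intro H x
    have hx := H x
    unfold box at hx
    split at hx
    next hcond =>
      rwa [CIRL.mul_le_iff_le_himp]
    next hcond =>
      have hfx : f x = ⊥ := le_bot_iff.mp hx
      rw [hfx]
      exact CIRL.bot_mul_le _ _
end

section
/- Let (X, ≤) be a totally ordered set and let {A_x : x ∈ X} be an indexed family of totally ordered sets each with least element ⊥ and greatest element ⊤. Then the set of antichain labelings in ∏_{x∈X} A_x is totally ordered by the pointwise order: for any two antichain labelings f and g, either f(x) ≤ g(x) for all x ∈ X, or g(x) ≤ f(x) for all x ∈ X. (Hence a poset product of chains indexed by a chain is again a chain.) -/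
/-! If `f` and `g` were incomparable there would be points `x`, `y` with `g x < f x` and
`f y < g y`. The labeling that is above `⊥` at the smaller of the two points is forced to be
`⊤` at the larger one, so it cannot lie strictly below the other labeling there. -/

section AntichainLabeling

variable {X : Type*} [Preorder X] {A : X → Type*}

def IsAntichainLabeling [∀ x, Bot (A x)] [∀ x, Top (A x)] (f : ∀ x, A x) : Prop :=
  ∀ x y : X, x < y → f x = ⊥ ∨ f y = ⊤

theorem IsAntichainLabeling.eq_top_of_ne_bot [∀ x, Bot (A x)] [∀ x, Top (A x)]
    {f : ∀ x, A x} (hf : IsAntichainLabeling f) {x y : X} (hx : f x ≠ ⊥) (hxy : x < y) :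
    f y = ⊤ :=
  (hf x y hxy).resolve_left hx

theorem IsAntichainLabeling.le_of_lt_of_lt [∀ x, Preorder (A x)] [∀ x, OrderBot (A x)]
    [∀ x, OrderTop (A x)] {f g : ∀ x, A x} (hf : IsAntichainLabeling f) {x y : X}
    (hx : g x < f x) (hxy : x < y) : g y ≤ f y :=
  (hf.eq_top_of_ne_bot (ne_bot_of_gt hx) hxy).symm ▸ le_top

end AntichainLabeling

/-- A poset product of chains indexed by a chain is a chain: if `(X, ≤)` is
totally ordered and each `A x` is totally ordered with least element `⊥` and
greatest element `⊤`, then any two antichain labelings `f, g` are comparable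
in the pointwise order. -/
theorem acLabelings_totally_ordered {X : Type*} [LinearOrder X]
    {A : X → Type*} [∀ x, LinearOrder (A x)] [∀ x, OrderBot (A x)] [∀ x, OrderTop (A x)]
    (f g : ∀ x, A x)
    (hf : ∀ x y : X, x < y → f x = ⊥ ∨ f y = ⊤)
    (hg : ∀ x y : X, x < y → g x = ⊥ ∨ g y = ⊤) :
    (∀ x, f x ≤ g x) ∨ (∀ x, g x ≤ f x) := by
  by_contra! ⟨⟨x, hx⟩, ⟨y, hy⟩⟩
  rcases lt_trichotomy x y with hxy | rfl | hyx
  · exact (IsAntichainLabeling.le_of_lt_of_lt hf hx hxy).not_gt hy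
  · exact hx.not_gt hy
  · exact (IsAntichainLabeling.le_of_lt_of_lt hg hy hyx).not_gt hx
end

section
/- Let (X, ≤) be a poset and let f, g : X → ℝ be antichain labelings with values in [0,1] (i.e., 0 ≤ f(x), g(x) ≤ 1 for all x, and for all x < y, f(x) = 0 or f(y) = 1, and likewise for g). Define the Łukasiewicz implication on [0,1] by a ⊸ b = min(1, 1 − a + b). Then for every x ∈ X, □(y ↦ f(y) ⊸ g(y))(x) is given by the following case distinction: it equals 1 if f(y) ≤ g(y) for all y ≥ x; it equals f(x) ⊸ g(x) if g(x) < f(x) < 1 and g(y) = 1 for all y > x; and it equals g(x) in all remaining cases. (This identity shows that the □-based semantics of implication agrees with the temporal-flow semantics of Aguzzoli, Bianchi, and Marra.) -/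
open Classical

/-- The Łukasiewicz implication on `[0,1]`: `a ⊸ b = min(1, 1 - a + b)`. -/
noncomputable def luk (a b : ℝ) : ℝ := min 1 (1 - a + b)

/-- The operator `□` on `[0,1]`-valued functions on a poset:
`□ f x = f x` if `f y = 1` for all `y > x`, and `□ f x = 0` otherwise. -/
noncomputable def boxR {X : Type*} [PartialOrder X] (f : X → ℝ) : X → ℝ :=
  fun x => if ∀ y, x < y → f y = 1 then f x else 0

/-! For ac-labelings `f, g`, the value `□(f ⊸ g)(x)` depends only on whether `f ≤ g` fails
strictly above `x`. If it does, at some `y > x` with `g y < f y ≤ 1`, then `□` returns `0`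
and the ac-property forces `g x = 0`. If it does not, `□` returns `f x ⊸ g x`, and the
ac-property gives `g y = 1` above `x` as soon as `g x < f x`; the case `f x = 1` then
collapses to `1 ⊸ g x = g x`. -/

lemma luk_eq_one_iff (a b : ℝ) : luk a b = 1 ↔ a ≤ b := by
  rw [luk, min_eq_left_iff]
  constructor <;> intro h <;> linarith

lemma luk_one_left {b : ℝ} (hb : b ≤ 1) : luk 1 b = b := by
  rw [luk, sub_self, zero_add, min_eq_right hb]

section Box

variable {X : Type*} [PartialOrder X] {f g : X → ℝ} {x : X}

lemma boxR_of_forall_lt (h : ∀ y, x < y → f y = 1) : boxR f x = f x :=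
  if_pos h

lemma boxR_eq_zero {y : X} (hxy : x < y) (hy : f y ≠ 1) : boxR f x = 0 :=
  if_neg fun h => hy (h y hxy)

lemma boxR_luk_of_forall_lt_le (h : ∀ y, x < y → f y ≤ g y) :
    boxR (fun y => luk (f y) (g y)) x = luk (f x) (g x) :=
  boxR_of_forall_lt fun y hy => (luk_eq_one_iff _ _).2 (h y hy)

lemma boxR_luk_eq_zero {y : X} (hxy : x < y) (hy : g y < f y) :
    boxR (fun y => luk (f y) (g y)) x = 0 :=
  boxR_eq_zero hxy fun h => hy.not_ge ((luk_eq_one_iff _ _).1 h)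

lemma eq_one_of_lt_of_le (hf : ∀ x y : X, x < y → f x = 0 ∨ f y = 1)
    (hg : ∀ x y : X, x < y → g x = 0 ∨ g y = 1) {y : X} (hxy : x < y)
    (hx : g x < f x) (hy : f y ≤ g y) (hgy : g y ≤ 1) : g y = 1 := by
  refine (hg x y hxy).elim (fun hgx => ?_) id
  have hfx : f x ≠ 0 := by rw [hgx] at hx; exact hx.ne'
  have hfy : f y = 1 := (hf x y hxy).resolve_left hfx
  exact le_antisymm hgy (hfy ▸ hy)

end Box

/-- The `□`-based semantics of implication agrees with the temporal-flow
semantics of Aguzzoli, Bianchi, and Marra: for antichain labelings `f, g`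
with values in `[0,1]`, `□(f ⊸ g)(x)` equals `1` if `f y ≤ g y` for all
`y ≥ x`; equals `f x ⊸ g x` if `g x < f x < 1` and `g y = 1` for all `y > x`;
and equals `g x` otherwise. -/
theorem box_luk_eq_temporal_implication {X : Type*} [PartialOrder X]
    (f g : X → ℝ)
    (hfb : ∀ x : X, 0 ≤ f x ∧ f x ≤ 1) (hgb : ∀ x : X, 0 ≤ g x ∧ g x ≤ 1)
    (hf : ∀ x y : X, x < y → f x = 0 ∨ f y = 1)
    (hg : ∀ x y : X, x < y → g x = 0 ∨ g y = 1) :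
    ∀ x : X, boxR (fun y => luk (f y) (g y)) x =
      if ∀ y : X, x ≤ y → f y ≤ g y then 1
      else if g x < f x ∧ f x < 1 ∧ ∀ y : X, x < y → g y = 1 then luk (f x) (g x)
      else g x := by
  intro x
  by_cases hle : ∀ y : X, x ≤ y → f y ≤ g y
  · rw [if_pos hle, boxR_luk_of_forall_lt_le fun y hy => hle y hy.le, luk_eq_one_iff]
    exact hle x le_rfl
  rw [if_neg hle]
  by_cases hlt : ∀ y : X, x < y → f y ≤ g y
  · have hx : g x < f x := by
      obtain ⟨y, hxy, hy⟩ := not_forall₂.1 hle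
      obtain rfl | hxy := hxy.eq_or_lt
      exacts [not_le.1 hy, absurd (hlt y hxy) hy]
    have hg1 : ∀ y, x < y → g y = 1 := fun y hxy =>
      eq_one_of_lt_of_le hf hg hxy hx (hlt y hxy) (hgb y).2
    rw [boxR_luk_of_forall_lt_le hlt]
    split_ifs with h
    · rfl
    · have hfx : f x = 1 := le_antisymm (hfb x).2 (not_lt.1 fun h' => h ⟨hx, h', hg1⟩)
      rw [hfx, luk_one_left (hgb x).2]
  · obtain ⟨y, hxy, hy⟩ := not_forall₂.1 hlt
    have hy : g y < f y := not_le.1 hy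
    have hgx : g x = 0 := (hg x y hxy).resolve_right (hy.trans_le (hfb y).2).ne
    rw [boxR_luk_eq_zero hxy hy, if_neg fun h => (hy.trans_le (hfb y).2).ne (h.2.2 y hxy), hgx]
end
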